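/- arXiv:2007.09618 — 3 statements merged into one kernel-verified Lean document; each statement's English description precedes it below -/
import Mathlib

section
/- Let D be an orientation of an undirected graph G=(V,E) with in-degree vector m. For nodes s and t, the vector m' := m + χ_s − χ_t is again the in-degree vector of some orientation of G if and only if D contains a directed path from s to t. -/
open Finset

/-- Head of edge `e` under orientation `o` (an orientation picks, for each edge,
one of its two end-nodes as head). -/
def ohead {V E : Type*} (ends : E → V × V) (o : E → Bool) (e : E) : V :=
  if o e then (ends e).1 else (ends e).2

/-- Tail of edge `e` under orientation `o`. -/
def otail {V E : Type*} (ends : E → V × V) (o : E → Bool) (e : E) : V :=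
  if o e then (ends e).2 else (ends e).1

/-- In-degree of node `v` in the orientation `o` of the graph. -/
def indeg {V E : Type*} [Fintype E] [DecidableEq V] (ends : E → V × V) (o : E → Bool)
    (v : V) : ℕ :=
  (Finset.univ.filter fun e => ohead ends o e = v).card

/-- `e_G(X)`: number of edges with at least one end-node in `X`. -/
def eG {V E : Type*} [Fintype E] [DecidableEq V] (ends : E → V × V) (X : Finset V) : ℕ :=
  (Finset.univ.filter fun e => (ends e).1 ∈ X ∨ (ends e).2 ∈ X).card

/-- `i_G(X)`: number of edges induced by `X` (both end-nodes in `X`). -/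
def iG {V E : Type*} [Fintype E] [DecidableEq V] (ends : E → V × V) (X : Finset V) : ℕ :=
  (Finset.univ.filter fun e => (ends e).1 ∈ X ∧ (ends e).2 ∈ X).card

/-- `ρ_D(X)`: number of arcs entering `X` (head in `X`, tail outside). -/
def inCut {V E : Type*} [Fintype E] [DecidableEq V] (ends : E → V × V) (o : E → Bool)
    (X : Finset V) : ℕ :=
  (Finset.univ.filter fun e => ohead ends o e ∈ X ∧ otail ends o e ∉ X).card

/-- `d_G(X)`: number of edges with exactly one end-node in `X`. -/
def dG {V E : Type*} [Fintype E] [DecidableEq V] (ends : E → V × V) (X : Finset V) : ℕ :=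
  (Finset.univ.filter fun e =>
    ((ends e).1 ∈ X ∧ (ends e).2 ∉ X) ∨ ((ends e).2 ∈ X ∧ (ends e).1 ∉ X)).card

/-- `Reach ends o s t`: there is a directed path from `s` to `t` in the orientation `o`. -/
def Reach {V E : Type*} (ends : E → V × V) (o : E → Bool) : V → V → Prop :=
  Relation.ReflTransGen fun u v => ∃ e, otail ends o e = u ∧ ohead ends o e = v

/-- `IsDipath ends o s t P`: the list of edges `P` forms a directed walk from `s` to `t`. -/
def IsDipath {V E : Type*} (ends : E → V × V) (o : E → Bool) : V → V → List E → Prop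
  | s, t, [] => s = t
  | s, t, e :: P => otail ends o e = s ∧ IsDipath ends o (ohead ends o e) t P

/-- The components of `m` sorted in decreasing order. -/
def decSeq {V : Type*} [Fintype V] (m : V → ℕ) : List ℕ :=
  (Multiset.sort (Finset.univ.val.map m) (· ≤ ·)).reverse

/-- The components of `m` sorted in increasing order. -/
def incSeq {V : Type*} [Fintype V] (m : V → ℕ) : List ℕ :=
  Multiset.sort (Finset.univ.val.map m) (· ≤ ·)


/-!
Reversing the arcs of a directed `s`–`t` walk without repeated arcs adds `χ_s − χ_t` to the
in-degree vector, and any directed walk can be shortcut to one without repeated arcs.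
Conversely, let `X` be the set of nodes from which `t` is reachable. No arc enters `X`, so
`m(X) = i_G(X) ≤ m'(X)` for the in-degree vector `m'` of any orientation; if `s ∉ X` then
`m + χ_s − χ_t` has sum `m(X) − 1` over `X`, so it is not such a vector.
-/

section Orientation

variable {V E : Type*} (ends : E → V × V)

def reverseOn [DecidableEq E] (o : E → Bool) (F : Finset E) (e : E) : Bool :=
  if e ∈ F then !o e else o e

lemma ohead_reverseOn [DecidableEq E] (o : E → Bool) (F : Finset E) (e : E) :
    ohead ends (reverseOn o F) e = if e ∈ F then otail ends o e else ohead ends o e := by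
  unfold reverseOn ohead otail
  split_ifs <;> simp_all

lemma ohead_mem_of_ohead_mem_of_otail_mem {o : E → Bool} {X : Set V} {e : E}
    (hhead : ohead ends o e ∈ X) (htail : otail ends o e ∈ X) (o' : E → Bool) :
    ohead ends o' e ∈ X := by
  unfold ohead otail at *
  cases ho : o e <;> cases ho' : o' e <;> simp_all

variable [Fintype E] [DecidableEq V]

lemma indeg_eq_sum (o : E → Bool) (v : V) :
    (indeg ends o v : ℤ) = ∑ e, if ohead ends o e = v then 1 else 0 :=
  natCast_card_filter _ _

lemma indeg_reverseOn [DecidableEq E] (o : E → Bool) (F : Finset E) (v : V) :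
    (indeg ends (reverseOn o F) v : ℤ) = indeg ends o v +
      ∑ e ∈ F, ((if otail ends o e = v then 1 else 0) - if ohead ends o e = v then 1 else 0) := by
  rw [indeg_eq_sum, indeg_eq_sum, ← sub_eq_iff_eq_add', ← sum_sub_distrib]
  refine (sum_subset (subset_univ F) fun e _ he => ?_).symm.trans (sum_congr rfl fun e he => ?_) <;>
    simp [ohead_reverseOn, he]

lemma sum_indeg (o : E → Bool) (X : Finset V) :
    ∑ v ∈ X, indeg ends o v = #{e | ohead ends o e ∈ X} :=
  sum_card_fiberwise_eq_card_filter _ _ _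

/-- An arc with head in `X` has both ends in `X`, so it keeps its head in `X` under any
reorientation. -/
lemma sum_indeg_le_of_closed {o : E → Bool} {X : Finset V}
    (hX : ∀ e, ohead ends o e ∈ X → otail ends o e ∈ X) (o' : E → Bool) :
    ∑ v ∈ X, indeg ends o v ≤ ∑ v ∈ X, indeg ends o' v := by
  rw [sum_indeg, sum_indeg]
  refine card_le_card fun e he => ?_
  simp only [mem_filter, mem_univ, true_and] at he ⊢
  exact ohead_mem_of_ohead_mem_of_otail_mem ends (X := (X : Set V)) he (hX e he) o'

end Orientation

section Dipath

variable {V E : Type*} (ends : E → V × V) (o : E → Bool)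

lemma IsDipath.suffix {t : V} {e : E} :
    ∀ {A : List E} {s : V} {B : List E}, IsDipath ends o s t (A ++ e :: B) →
      IsDipath ends o (otail ends o e) t (e :: B)
  | [], _, _, h => ⟨rfl, h.2⟩
  | _ :: _, _, _, h => IsDipath.suffix h.2

lemma Reach.exists_nodup_isDipath {s t : V} (h : Reach ends o s t) :
    ∃ P : List E, P.Nodup ∧ IsDipath ends o s t P := by
  induction h using Relation.ReflTransGen.head_induction_on with
  | refl => exact ⟨[], List.nodup_nil, rfl⟩
  | head hstep _ ih =>
    obtain ⟨e, rfl, rfl⟩ := hstep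
    obtain ⟨Q, hQ, hpath⟩ := ih
    by_cases he : e ∈ Q
    · obtain ⟨A, B, rfl⟩ := List.append_of_mem he
      exact ⟨e :: B, (List.nodup_append.mp hQ).2.1, IsDipath.suffix ends o hpath⟩
    · exact ⟨e :: Q, List.nodup_cons.mpr ⟨he, hQ⟩, rfl, hpath⟩

lemma IsDipath.sum_map_tail_sub_head [DecidableEq V] {s t : V} {P : List E}
    (hP : IsDipath ends o s t P) (v : V) :
    (P.map fun e => (if otail ends o e = v then 1 else 0) -
      if ohead ends o e = v then (1 : ℤ) else 0).sum =
      (if s = v then 1 else 0) - if t = v then 1 else 0 := by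
  induction P generalizing s with
  | nil => cases hP; simp
  | cons e P ih =>
    obtain ⟨rfl, hP⟩ := hP
    rw [List.map_cons, List.sum_cons, ih hP]
    ring

end Dipath

theorem exchange_iff_dipath_general {V E : Type*} [Fintype V] [Fintype E] [DecidableEq V]
    (ends : E → V × V) (o : E → Bool) (s t : V) :
    (∃ o' : E → Bool, ∀ v, (indeg ends o' v : ℤ) =
        (indeg ends o v : ℤ) + (if v = s then 1 else 0) - (if v = t then 1 else 0)) ↔
      Reach ends o s t := by
  classical
  constructor
  · rintro ⟨o', ho'⟩
    by_contra hst
    set X : Finset V := {v | Reach ends o v t}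
    have hclosed : ∀ e, ohead ends o e ∈ X → otail ends o e ∈ X := fun e he => by
      simp only [X, mem_filter, mem_univ, true_and] at he ⊢
      exact Relation.ReflTransGen.head ⟨e, rfl, rfl⟩ he
    have hle : ∑ v ∈ X, (indeg ends o v : ℤ) ≤ ∑ v ∈ X, (indeg ends o' v : ℤ) := by
      exact_mod_cast sum_indeg_le_of_closed ends hclosed o'
    have hs : s ∉ X := by simpa [X] using hst
    have ht : t ∈ X := mem_filter.mpr ⟨mem_univ t, .refl⟩
    simp only [ho', sum_sub_distrib, sum_add_distrib, sum_ite_eq', if_neg hs, if_pos ht] at hle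
    omega
  · intro h
    obtain ⟨P, hnodup, hP⟩ := h.exists_nodup_isDipath
    refine ⟨reverseOn o P.toFinset, fun v => ?_⟩
    rw [indeg_reverseOn, List.sum_toFinset _ hnodup, hP.sum_map_tail_sub_head]
    simp only [eq_comm (b := v)]
    ring

/-- For an orientation `D` of `G` with in-degree vector `m` and nodes `s, t`,
the vector `m + χ_s − χ_t` is the in-degree vector of some orientation of `G` iff `D`
contains a directed path from `s` to `t`. -/
theorem exchange_iff_dipath {V E : Type*} [Fintype V] [Fintype E] [DecidableEq V]
    (ends : E → V × V) (hloop : ∀ e, (ends e).1 ≠ (ends e).2)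
    (o : E → Bool) (s t : V) :
    (∃ o' : E → Bool, ∀ v, (indeg ends o' v : ℤ) =
        (indeg ends o v : ℤ) + (if v = s then 1 else 0) - (if v = t then 1 else 0)) ↔
      Reach ends o s t :=
  exchange_iff_dipath_general ends o s t
end

section
/- Let D be an (f,g)-bounded orientation of G=(V,E). Then D is decreasingly minimal among (f,g)-bounded orientations of G if and only if there is no directed path in D from a node s with ρ_D(s) < g(s) to a node t with ρ_D(t) > f(t) such that ρ_D(t) ≥ ρ_D(s) + 2. -/
/-!
Fix `N > |V|`. On nonincreasing sequences of length less than `N` the lexicographic order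
agrees with the order of the power sums `∑ N ^ mᵢ`, so `D` is dec-min exactly when it minimizes
`Φ(D) = ∑ᵥ N ^ ρ_D(v)` among `(f,g)`-bounded orientations.

Reversing a directed trail from `s` to `t` raises `ρ(s)` by one, lowers `ρ(t)` by one and fixes
every other in-degree. If `ρ(t) ≥ ρ(s) + 2` this strictly decreases `Φ`, and the slack at `s` and
`t` keeps the orientation bounded. Conversely, suppose `D` has no such path and `D'` is bounded,
and pick `s` with `ρ_D(s) < ρ_D'(s)`. Following arcs of `D` that `D'` reverses leads from `s` to
some `t` with `ρ_D'(t) < ρ_D(t)`. Reversing this trail in `D'` gives a bounded orientation that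
differs from `D` on fewer arcs, and since `ρ_D'(t) < ρ_D(t) ≤ ρ_D(s) + 1 ≤ ρ_D'(s)` the move
does not increase `Φ`.
Induction on the number of arcs where `D'` differs from `D` gives `Φ(D) ≤ Φ(D')`.
-/

open Finset

/-- Embedding of a natural number in-degree into `ℤ ∪ {−∞, +∞}`. -/
def zE (n : ℕ) : WithBot (WithTop ℤ) := (((n : ℤ) : WithTop ℤ) : WithBot (WithTop ℤ))

/-- An orientation is `(f,g)`-bounded if `f(v) ≤ ρ(v) ≤ g(v)` for every node `v`
(where `f`, `g` may take the values `−∞`, `+∞`). -/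
def Bounded {V E : Type*} [Fintype E] [DecidableEq V]
    (ends : E → V × V) (f g : V → WithBot (WithTop ℤ)) (o : E → Bool) : Prop :=
  ∀ v, f v ≤ zE (indeg ends o v) ∧ zE (indeg ends o v) ≤ g v

section PowerSum

lemma sum_map_pow_lt_of_lex {N : ℕ} {l l' : List ℕ} (h : List.Lex (· < ·) l l')
    (hl : l.Pairwise (· ≥ ·)) (hN : l.length < N) :
    (l.map (N ^ ·)).sum < (l'.map (N ^ ·)).sum := by
  induction h with
  | nil =>
    simp only [List.length_nil, List.map_nil, List.sum_nil, List.map_cons, List.sum_cons] at hN ⊢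
    exact Nat.add_pos_left (Nat.pow_pos hN) _
  | cons _ ih =>
    simp only [List.length_cons, List.map_cons, List.sum_cons] at hN ⊢
    have := ih hl.of_cons (by omega)
    omega
  | @rel a₁ l₁ a₂ l₂ hlt =>
    simp only [List.length_cons] at hN
    -- the leading term `N ^ a₂` outweighs all of `a₁ :: l₁`, each term being at most `N ^ a₁`
    have htail := List.sum_le_card_nsmul (l₁.map (N ^ ·)) (N ^ a₁) <| List.forall_mem_map.2
      fun a ha => Nat.pow_le_pow_right (by omega) (List.rel_of_pairwise_cons hl ha)
    calc ((a₁ :: l₁).map (N ^ ·)).sum ≤ (l₁.length + 1) * N ^ a₁ := by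
          simp only [List.length_map, List.map_cons, List.sum_cons, smul_eq_mul] at htail ⊢
          linarith
      _ < N * N ^ a₁ := Nat.mul_lt_mul_of_pos_right hN (Nat.pow_pos (by omega))
      _ = N ^ (a₁ + 1) := by ring
      _ ≤ N ^ a₂ := Nat.pow_le_pow_right (by omega) hlt
      _ ≤ ((a₂ :: l₂).map (N ^ ·)).sum := by simp

variable {V : Type*}

section decSeq
variable [Fintype V]

lemma decSeq_pairwise (m : V → ℕ) : (decSeq m).Pairwise (· ≥ ·) := by
  simp [decSeq, List.pairwise_reverse]

lemma length_decSeq (m : V → ℕ) : (decSeq m).length = Fintype.card V := by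
  simp [decSeq, Finset.card_univ]

lemma sum_pow_eq_sum_map_decSeq (N : ℕ) (m : V → ℕ) :
    ∑ v, N ^ m v = ((decSeq m).map (N ^ ·)).sum := by
  rw [← Multiset.sum_coe, ← Multiset.map_coe, decSeq, Multiset.coe_reverse, Multiset.sort_eq,
    Multiset.map_map]
  rfl

lemma decSeq_le_decSeq_iff {N : ℕ} (hN : Fintype.card V < N) (m m' : V → ℕ) :
    decSeq m ≤ decSeq m' ↔ ∑ v, N ^ m v ≤ ∑ v, N ^ m' v := by
  have hmono : StrictMonoOn (fun l : List ℕ => (l.map (N ^ ·)).sum)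
      {l | l.Pairwise (· ≥ ·) ∧ l.length < N} :=
    fun l hl _ _ h => sum_map_pow_lt_of_lex h hl.1 hl.2
  have hmem (m : V → ℕ) : decSeq m ∈ {l : List ℕ | l.Pairwise (· ≥ ·) ∧ l.length < N} :=
    ⟨decSeq_pairwise m, (length_decSeq m).trans_lt hN⟩
  rw [sum_pow_eq_sum_map_decSeq, sum_pow_eq_sum_map_decSeq]
  exact (hmono.le_iff_le (hmem m) (hmem m')).symm

end decSeq

variable [DecidableEq V] {N : ℕ} {m m' : V → ℕ} {s t : V}

lemma apply_of_add_single_eq_add_single (h : m' + Pi.single t 1 = m + Pi.single s 1)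
    (hst : s ≠ t) :
    m' s = m s + 1 ∧ m' t + 1 = m t ∧ ∀ v, v ≠ s → v ≠ t → m' v = m v := by
  have hv (v : V) := congr_fun h v
  simp only [Pi.add_apply, Pi.single_apply] at hv
  exact ⟨by simpa [hst] using hv s, by simpa [hst.symm] using hv t,
    fun v hvs hvt => by simpa [hvs, hvt] using hv v⟩

variable [Fintype V]

lemma sum_add_pair_eq_sum_add_pair {M : Type*} [AddCommMonoid M] {φ ψ : V → M} (hst : s ≠ t)
    (h : ∀ v, v ≠ s → v ≠ t → φ v = ψ v) :
    ∑ v, φ v + (ψ s + ψ t) = ∑ v, ψ v + (φ s + φ t) := by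
  rw [← sum_add_sum_compl {s, t} φ, ← sum_add_sum_compl {s, t} ψ, sum_pair hst, sum_pair hst,
    sum_congr rfl fun v hv => h v (by simp_all) (by simp_all)]
  abel

lemma sum_pow_le_of_add_single_eq (hN : 1 ≤ N) (h : m' + Pi.single t 1 = m + Pi.single s 1)
    (hlt : m s < m t) : ∑ v, N ^ m' v ≤ ∑ v, N ^ m v := by
  have hst : s ≠ t := by rintro rfl; omega
  obtain ⟨hs, ht, hrest⟩ := apply_of_add_single_eq_add_single h hst
  have hsum := sum_add_pair_eq_sum_add_pair (φ := fun v => N ^ m' v) (ψ := fun v => N ^ m v) hst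
    fun v hvs hvt => by rw [hrest v hvs hvt]
  have hpow : N ^ m s ≤ N ^ m' t := Nat.pow_le_pow_right hN (by omega)
  simp only [hs, ← ht, pow_succ] at hsum
  nlinarith

lemma sum_pow_lt_of_add_single_eq (hN : 2 ≤ N) (h : m' + Pi.single t 1 = m + Pi.single s 1)
    (hlt : m s + 1 < m t) : ∑ v, N ^ m' v < ∑ v, N ^ m v := by
  have hst : s ≠ t := by rintro rfl; omega
  obtain ⟨hs, ht, hrest⟩ := apply_of_add_single_eq_add_single h hst
  have hsum := sum_add_pair_eq_sum_add_pair (φ := fun v => N ^ m' v) (ψ := fun v => N ^ m v) hst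
    fun v hvs hvt => by rw [hrest v hvs hvt]
  have hpow : N ^ m s < N ^ m' t := Nat.pow_lt_pow_right (by omega) (by omega)
  simp only [hs, ← ht, pow_succ] at hsum
  nlinarith

end PowerSum

section Bounds

lemma zE_strictMono : StrictMono zE := fun _ _ h => by
  simp only [zE]; exact_mod_cast h

lemma zE_mono : Monotone zE := zE_strictMono.monotone

lemma zE_add_one_le_iff {n : ℕ} {c : WithBot (WithTop ℤ)} : zE (n + 1) ≤ c ↔ zE n < c := by
  induction c using WithBot.recBotCoe with
  | bot => simp [zE]
  | coe c =>
    induction c using WithTop.recTopCoe with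
    | top =>
      exact iff_of_true (WithBot.coe_le_coe.2 le_top) (WithBot.coe_lt_coe.2 (WithTop.coe_lt_top _))
    | coe k =>
      simp only [zE, WithBot.coe_le_coe, WithBot.coe_lt_coe, WithTop.coe_le_coe,
        WithTop.coe_lt_coe]
      push_cast; omega

lemma lt_zE_add_one_iff {n : ℕ} {c : WithBot (WithTop ℤ)} : c < zE (n + 1) ↔ c ≤ zE n := by
  induction c using WithBot.recBotCoe with
  | bot => simp [zE]
  | coe c =>
    induction c using WithTop.recTopCoe with
    | top => simp [zE]
    | coe k =>
      simp only [zE, WithBot.coe_le_coe, WithBot.coe_lt_coe, WithTop.coe_le_coe,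
        WithTop.coe_lt_coe]
      push_cast; omega

variable {V E : Type*} [Fintype E] [DecidableEq V] {ends : E → V × V}
  {f g : V → WithBot (WithTop ℤ)} {o o' o₁ o₂ : E → Bool} {s t : V}

lemma Bounded.of_add_single_eq (ho : Bounded ends f g o) (hst : s ≠ t)
    (h : indeg ends o' + Pi.single t 1 = indeg ends o + Pi.single s 1)
    (hs : zE (indeg ends o s) < g s) (ht : f t < zE (indeg ends o t)) :
    Bounded ends f g o' := by
  obtain ⟨h's, h't, hrest⟩ := apply_of_add_single_eq_add_single h hst
  intro v
  by_cases hvs : v = s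
  · subst hvs
    rw [h's]
    exact ⟨(ho v).1.trans (zE_mono (Nat.le_succ _)), zE_add_one_le_iff.2 hs⟩
  by_cases hvt : v = t
  · subst hvt
    exact ⟨lt_zE_add_one_iff.1 (h't ▸ ht), (zE_mono (by omega)).trans (ho v).2⟩
  rw [hrest v hvs hvt]
  exact ho v

lemma Bounded.of_mem_uIcc (h₁ : Bounded ends f g o₁) (h₂ : Bounded ends f g o₂)
    (h : ∀ v, indeg ends o v ∈ Set.uIcc (indeg ends o₁ v) (indeg ends o₂ v)) :
    Bounded ends f g o := by
  intro v
  rcases Set.mem_uIcc.1 (h v) with ⟨hlo, hhi⟩ | ⟨hlo, hhi⟩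
  · exact ⟨(h₁ v).1.trans (zE_mono hlo), (zE_mono hhi).trans (h₂ v).2⟩
  · exact ⟨(h₂ v).1.trans (zE_mono hlo), (zE_mono hhi).trans (h₁ v).2⟩

end Bounds

section Dipath

variable {V E : Type*} {ends : E → V × V} {o o' : E → Bool} {s t : V} {P : List E}

lemma isDipath_append_iff {Q : List E} :
    IsDipath ends o s t (P ++ Q) ↔ ∃ u, IsDipath ends o s u P ∧ IsDipath ends o u t Q := by
  induction P generalizing s with
  | nil => simp [IsDipath]
  | cons e P ih => simp [IsDipath, ih, and_assoc]

lemma reach_iff_exists_isDipath : Reach ends o s t ↔ ∃ P, IsDipath ends o s t P := by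
  constructor
  · intro h
    induction h using Relation.ReflTransGen.head_induction_on with
    | refl => exact ⟨[], rfl⟩
    | head hstep _ ih =>
      obtain ⟨e, he, rfl⟩ := hstep
      obtain ⟨P, hP⟩ := ih
      exact ⟨e :: P, he, hP⟩
  · rintro ⟨P, hP⟩
    induction P generalizing s with
    | nil => exact hP ▸ .refl
    | cons e P ih => exact .head ⟨e, hP.1, rfl⟩ (ih hP.2)

lemma isDipath_congr (h : ∀ e ∈ P, o' e = o e) :
    IsDipath ends o' s t P ↔ IsDipath ends o s t P := by
  induction P generalizing s with
  | nil => rfl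
  | cons e P ih =>
    simp only [IsDipath, ohead, otail, h e List.mem_cons_self,
      ih fun e he => h e (List.mem_cons_of_mem _ he)]

lemma IsDipath.map_otail_append (hP : IsDipath ends o s t P) :
    P.map (otail ends o) ++ [t] = s :: P.map (ohead ends o) := by
  induction P generalizing s with
  | nil => exact congrArg (· :: []) hP.symm
  | cons e P ih => simp [hP.1, ih hP.2]

lemma IsDipath.exists_nodup_sublist (hP : IsDipath ends o s t P) :
    ∃ Q, Q.Sublist P ∧ IsDipath ends o s t Q ∧ Q.Nodup := by
  induction P generalizing s with
  | nil => exact ⟨[], .slnil, hP, .nil⟩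
  | cons e P ih =>
    obtain ⟨Q, hQP, hQ, hnd⟩ := ih hP.2
    by_cases he : e ∈ Q
    · -- the trail `Q` revisits the arc `e`, which starts at `s`: keep `Q` from there on
      obtain ⟨A, B, rfl⟩ := List.append_of_mem he
      obtain ⟨-, -, -, hB⟩ := isDipath_append_iff.1 hQ
      refine ⟨e :: B, ?_, ⟨hP.1, hB⟩, hnd.sublist (List.sublist_append_right _ _)⟩
      exact ((List.sublist_append_right A _).trans hQP).cons e
    · exact ⟨e :: Q, hQP.cons_cons e, ⟨hP.1, hQ⟩, List.nodup_cons.2 ⟨he, hnd⟩⟩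

end Dipath

section Reversal

variable {V E : Type*} {ends : E → V × V} {o o' : E → Bool} {e : E}

lemma ohead_of_eq (h : o' e = o e) : ohead ends o' e = ohead ends o e := by
  simp only [ohead, h]

lemma ohead_of_ne (h : o' e ≠ o e) : ohead ends o' e = otail ends o e := by
  simp only [ohead, otail]
  cases h₁ : o e <;> cases h₂ : o' e <;> simp_all

variable [DecidableEq E]

def reverseArcs (P : List E) (o : E → Bool) (e : E) : Bool :=
  if e ∈ P then !o e else o e

lemma reverseArcs_ne_iff {P : List E} : reverseArcs P o e ≠ o e ↔ e ∈ P := by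
  unfold reverseArcs
  split_ifs with h <;> simp [h]

end Reversal

section Counting

variable {V E : Type*} [Fintype E] [DecidableEq V] {ends : E → V × V} {o o' : E → Bool}
  {s t : V} {P : List E}

lemma sum_indeg_eq_card_filter (X : Finset V) :
    ∑ v ∈ X, indeg ends o v = #{e | ohead ends o e ∈ X} :=
  sum_card_fiberwise_eq_card_filter univ X (ohead ends o)

lemma indeg_eq_of_forall_le [Fintype V] (h : ∀ v, indeg ends o' v ≤ indeg ends o v) :
    indeg ends o' = indeg ends o := by
  have hsum : ∑ v, indeg ends o' v = ∑ v, indeg ends o v := by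
    simp only [sum_indeg_eq_card_filter, mem_univ, filter_true]
  funext v
  exact (sum_eq_sum_iff_of_le fun v _ => h v).1 hsum v (mem_univ v)

variable [DecidableEq E]

lemma card_filter_mem_eq_count (hnd : P.Nodup) (φ : E → V) (v : V) :
    #{e | e ∈ P ∧ φ e = v} = (P.map φ).count v := by
  rw [List.count_eq_countP, List.countP_map, List.countP_eq_length_filter,
    ← List.toFinset_card_of_nodup (hnd.filter _)]
  congr 1
  ext e
  simp

lemma indeg_add_card_filter_eq (hdiff : ∀ e, o' e ≠ o e ↔ e ∈ P) (v : V) :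
    indeg ends o' v + #{e | e ∈ P ∧ ohead ends o e = v} =
      indeg ends o v + #{e | e ∈ P ∧ otail ends o e = v} := by
  simp only [indeg, card_filter, ← sum_add_distrib]
  refine sum_congr rfl fun e _ => ?_
  by_cases he : e ∈ P
  · simp only [ohead_of_ne ((hdiff e).2 he), he, true_and]
    split_ifs <;> rfl
  · simp [ohead_of_eq (not_not.1 (mt (hdiff e).1 he)), he]

lemma IsDipath.indeg_add_single_eq (hP : IsDipath ends o s t P) (hnd : P.Nodup)
    (hdiff : ∀ e, o' e ≠ o e ↔ e ∈ P) :
    indeg ends o' + Pi.single t 1 = indeg ends o + Pi.single s 1 := by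
  funext v
  have hcount := congrArg (List.count v) hP.map_otail_append
  have hdeg := indeg_add_card_filter_eq (ends := ends) hdiff v
  rw [card_filter_mem_eq_count hnd, card_filter_mem_eq_count hnd] at hdeg
  simp only [List.count_append, List.count_cons, List.count_nil, beq_iff_eq] at hcount
  simp only [Pi.add_apply, Pi.single_apply, eq_comm (a := v)]
  omega

end Counting

section Exchange

variable {V E : Type*} [Fintype E] [DecidableEq V]

def HasImprovingPath (ends : E → V × V) (f g : V → WithBot (WithTop ℤ)) (o : E → Bool) : Prop :=
  ∃ s t : V, Reach ends o s t ∧ zE (indeg ends o s) < g s ∧ f t < zE (indeg ends o t) ∧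
    indeg ends o s + 2 ≤ indeg ends o t

variable {ends : E → V × V} {o o' : E → Bool} {s : V}

/-- The set `R` of nodes reachable from `s` along arcs of `o` that `o'` reverses is entered in
`o'` only by arcs that already enter it in `o`, so `o'` cannot raise the total in-degree of `R`;
since it raises the in-degree of `s`, it lowers that of some other node of `R`. -/
lemma exists_isDipath_of_indeg_lt [Fintype V] (hs : indeg ends o s < indeg ends o' s) :
    ∃ t P, IsDipath ends o s t P ∧ (∀ e ∈ P, o' e ≠ o e) ∧ indeg ends o' t < indeg ends o t := by
  classical
  by_contra! hc
  set R : Finset V := {v | ∃ P, IsDipath ends o s v P ∧ ∀ e ∈ P, o' e ≠ o e}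
  have hsR : s ∈ R := by simpa [R] using ⟨[], rfl, by simp⟩
  have hle : ∑ v ∈ R, indeg ends o' v ≤ ∑ v ∈ R, indeg ends o v := by
    rw [sum_indeg_eq_card_filter, sum_indeg_eq_card_filter]
    refine card_le_card fun e he => ?_
    simp only [mem_filter, mem_univ, true_and] at he ⊢
    by_cases hdiff : o' e = o e
    · rwa [← ohead_of_eq hdiff]
    · rw [ohead_of_ne hdiff] at he
      obtain ⟨P, hP, hPF⟩ := (mem_filter.1 he).2
      refine mem_filter.2 ⟨mem_univ _, P ++ [e], isDipath_append_iff.2 ⟨_, hP, rfl, rfl⟩, ?_⟩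
      simpa [or_imp, forall_and] using ⟨hPF, hdiff⟩
  have hlt : ∑ v ∈ R, indeg ends o v < ∑ v ∈ R, indeg ends o' v := by
    refine sum_lt_sum (fun v hv => ?_) ⟨s, hsR, hs⟩
    obtain ⟨P, hP, hPF⟩ := (mem_filter.1 hv).2
    exact hc v P hP hPF
  omega

variable [Fintype V] {f g : V → WithBot (WithTop ℤ)} {N : ℕ}

lemma HasImprovingPath.exists_sum_pow_lt (hN : 2 ≤ N) (ho : Bounded ends f g o)
    (h : HasImprovingPath ends f g o) :
    ∃ o', Bounded ends f g o' ∧ ∑ v, N ^ indeg ends o' v < ∑ v, N ^ indeg ends o v := by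
  classical
  obtain ⟨s, t, hst, hs, ht, h2⟩ := h
  obtain ⟨P, hP⟩ := reach_iff_exists_isDipath.1 hst
  obtain ⟨Q, -, hQ, hnd⟩ := hP.exists_nodup_sublist
  have hdeg := hQ.indeg_add_single_eq hnd fun e => reverseArcs_ne_iff (o := o)
  exact ⟨_, ho.of_add_single_eq (by rintro rfl; omega) hdeg hs ht,
    sum_pow_lt_of_add_single_eq hN hdeg (by omega)⟩

lemma exists_bounded_closer_of_indeg_lt (hN : 1 ≤ N) (ho : Bounded ends f g o)
    (hno : ¬ HasImprovingPath ends f g o) (ho' : Bounded ends f g o')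
    (hs : indeg ends o s < indeg ends o' s) :
    ∃ o'', Bounded ends f g o'' ∧ #{e | o'' e ≠ o e} < #{e | o' e ≠ o e} ∧
      ∑ v, N ^ indeg ends o'' v ≤ ∑ v, N ^ indeg ends o' v := by
  classical
  obtain ⟨t, P, hP, hPF, ht⟩ := exists_isDipath_of_indeg_lt hs
  obtain ⟨Q, hQP, hQ, hnd⟩ := hP.exists_nodup_sublist
  have hst : s ≠ t := by rintro rfl; omega
  have hQF : ∀ e ∈ Q, o' e ≠ o e := fun e he => hPF e (hQP.subset he)
  set o'' := reverseArcs Q o'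
  have hQo : ∀ e ∈ Q, o'' e = o e := fun e he => by
    simpa [o'', reverseArcs, he, Bool.eq_not] using hQF e he
  have hdeg : indeg ends o' + Pi.single t 1 = indeg ends o'' + Pi.single s 1 :=
    ((isDipath_congr hQo).2 hQ).indeg_add_single_eq hnd fun _ => ne_comm.trans reverseArcs_ne_iff
  obtain ⟨h's, h't, hrest⟩ := apply_of_add_single_eq_add_single hdeg hst
  have hts : indeg ends o t ≤ indeg ends o s + 1 := by
    by_contra! h
    exact hno ⟨s, t, reach_iff_exists_isDipath.2 ⟨Q, hQ⟩, (zE_strictMono hs).trans_le (ho' s).2,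
      (ho' t).1.trans_lt (zE_strictMono ht), by omega⟩
  refine ⟨o'', ho.of_mem_uIcc ho' fun v => ?_, card_lt_card ?_,
    sum_pow_le_of_add_single_eq hN hdeg.symm (by omega)⟩
  · rw [Set.mem_uIcc]
    by_cases hvs : v = s
    · subst hvs; omega
    by_cases hvt : v = t
    · subst hvt; omega
    rw [hrest v hvs hvt]
    omega
  · refine (ssubset_iff_of_subset fun e he => ?_).2 ?_
    · simp only [mem_filter, mem_univ, true_and] at he ⊢
      by_cases heQ : e ∈ Q
      · exact absurd (hQo e heQ) he
      · simpa [o'', reverseArcs, heQ] using he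
    · obtain ⟨e, he⟩ := List.exists_mem_of_ne_nil Q (by rintro rfl; exact hst hQ)
      exact ⟨e, by simpa using hQF e he, by simpa using hQo e he⟩

lemma sum_pow_indeg_le_of_not_hasImprovingPath (hN : 1 ≤ N) (ho : Bounded ends f g o)
    (hno : ¬ HasImprovingPath ends f g o) (o' : E → Bool) (ho' : Bounded ends f g o') :
    ∑ v, N ^ indeg ends o v ≤ ∑ v, N ^ indeg ends o' v := by
  classical
  induction hn : #{e | o' e ≠ o e} using Nat.strong_induction_on generalizing o' with
  | _ n ih =>
  by_cases hs : ∃ s, indeg ends o s < indeg ends o' s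
  · obtain ⟨s, hs⟩ := hs
    obtain ⟨o'', ho'', hcard, hle⟩ := exists_bounded_closer_of_indeg_lt hN ho hno ho' hs
    exact (ih _ (hn ▸ hcard) o'' ho'' rfl).trans hle
  · push Not at hs
    rw [indeg_eq_of_forall_le hs]

end Exchange

theorem decmin_bounded_orientation_iff_general {V E : Type*} [Fintype V] [Fintype E] [DecidableEq V]
    (ends : E → V × V)
    (f g : V → WithBot (WithTop ℤ))
    (o : E → Bool) (ho : Bounded ends f g o) :
    (∀ o' : E → Bool, Bounded ends f g o' →
        decSeq (indeg ends o) ≤ decSeq (indeg ends o')) ↔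
      ¬ ∃ s t : V, Reach ends o s t ∧ zE (indeg ends o s) < g s ∧
        f t < zE (indeg ends o t) ∧ indeg ends o s + 2 ≤ indeg ends o t := by
  have hN : Fintype.card V < Fintype.card V + 2 := by omega
  constructor
  · intro hmin h
    obtain ⟨o', ho', hlt⟩ := HasImprovingPath.exists_sum_pow_lt le_add_self ho h
    exact ((decSeq_le_decSeq_iff hN _ _).1 (hmin o' ho')).not_gt hlt
  · intro hno o' ho'
    exact (decSeq_le_decSeq_iff hN _ _).2
      (sum_pow_indeg_le_of_not_hasImprovingPath (by omega) ho hno o' ho')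

/-- An `(f,g)`-bounded orientation `D` of `G` is decreasingly minimal
among `(f,g)`-bounded orientations iff there is no directed path in `D` from a node `s`
with `ρ_D(s) < g(s)` to a node `t` with `ρ_D(t) > f(t)` such that `ρ_D(t) ≥ ρ_D(s) + 2`. -/
theorem decmin_bounded_orientation_iff {V E : Type*} [Fintype V] [Fintype E] [DecidableEq V]
    (ends : E → V × V) (hloop : ∀ e, (ends e).1 ≠ (ends e).2)
    (f g : V → WithBot (WithTop ℤ)) (hfg : ∀ v, f v ≤ g v)
    (o : E → Bool) (ho : Bounded ends f g o) :
    (∀ o' : E → Bool, Bounded ends f g o' →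
        decSeq (indeg ends o) ≤ decSeq (indeg ends o')) ↔
      ¬ ∃ s t : V, Reach ends o s t ∧ zE (indeg ends o s) < g s ∧
        f t < zE (indeg ends o t) ∧ indeg ends o s + 2 ≤ indeg ends o t :=
  decmin_bounded_orientation_iff_general ends f g o ho
end

section
/- Let G=(V,E) be an undirected graph and k a positive integer. An integral vector m: V → Z with m̃(V) = |E| is the in-degree vector of a k-edge-connected orientation of G if and only if m̃(X) ≥ i_G(X) + k for every X with ∅ ⊂ X ⊂ V. -/
open Finset

/-!
Summing in-degrees over `X` counts every arc with head in `X`, so the in-degree vector `m` of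
any orientation satisfies `m̃(X) = ρ(X) + i_G(X)`. This gives necessity, and reduces sufficiency
to the orientation lemma: `m` is an in-degree vector once `m̃(V) = |E|` and `m̃(X) ≥ i_G(X)`
for all `X`. For that, give each node `v` exactly `m v` slots and match edges to slots at one of
their end-nodes by Hall's theorem: a set `F` of edges covers a node set `X` with `i_G(X) ≥ |F|`,
hence at least `|F|` slots. Directing each edge into the node of its slot gives in-degrees
`≤ m`, with equality since both sum to `|E|`.
-/

lemma ohead_mem_and_otail_mem_iff {V E : Type*} (ends : E → V × V) (o : E → Bool)
    (X : Finset V) (e : E) :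
    ohead ends o e ∈ X ∧ otail ends o e ∈ X ↔ (ends e).1 ∈ X ∧ (ends e).2 ∈ X := by
  unfold ohead otail
  cases o e <;> simp [and_comm]

section Orientation

variable {V E : Type*} [Fintype E] [DecidableEq V] (ends : E → V × V)

lemma sum_indeg_eq_inCut_add_iG (o : E → Bool) (X : Finset V) :
    ∑ v ∈ X, indeg ends o v = inCut ends o X + iG ends X := by
  simp only [indeg]
  rw [sum_card_fiberwise_eq_card_filter, inCut, iG,
    ← card_filter_add_card_filter_not (p := fun e => otail ends o e ∉ X), filter_filter,
    filter_filter]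
  simp only [not_not, ohead_mem_and_otail_mem_iff]

lemma sum_indeg_eq_card [Fintype V] (o : E → Bool) : ∑ v, indeg ends o v = Fintype.card E := by
  simp [indeg, sum_card_fiberwise_eq_card_filter]

lemma iG_univ [Fintype V] : iG ends (univ : Finset V) = Fintype.card E := by
  simp [iG]

lemma card_le_iG_biUnion (F : Finset E) :
    #F ≤ iG ends (F.biUnion fun e => {(ends e).1, (ends e).2}) :=
  card_le_card fun e he =>
    mem_filter.mpr ⟨mem_univ e, mem_biUnion.mpr ⟨e, he, by simp⟩,
      mem_biUnion.mpr ⟨e, he, by simp⟩⟩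

lemma exists_orientation_indeg_le (n : V → ℕ)
    (hn : ∀ X : Finset V, iG ends X ≤ ∑ v ∈ X, n v) :
    ∃ o : E → Bool, ∀ v, indeg ends o v ≤ n v := by
  let slots (X : Finset V) : Finset (Σ _ : V, ℕ) := X.sigma fun v => range (n v)
  obtain ⟨f, hf_inj, hf_mem⟩ := (all_card_le_biUnion_card_iff_exists_injective
    fun e => slots {(ends e).1, (ends e).2}).mp fun F => by
      have hunion : F.biUnion (fun e => slots {(ends e).1, (ends e).2})
          = slots (F.biUnion fun e => {(ends e).1, (ends e).2}) := by
        ext ⟨v, i⟩; simp only [slots, mem_biUnion, mem_sigma]; aesop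
      rw [hunion, card_sigma]
      simpa using (card_le_iG_biUnion ends F).trans (hn _)
  refine ⟨fun e => decide ((f e).1 = (ends e).1), fun v => ?_⟩
  have hhead : ∀ e, ohead ends (fun e => decide ((f e).1 = (ends e).1)) e = (f e).1 := by
    intro e
    have := (mem_sigma.mp (hf_mem e)).1
    unfold ohead
    by_cases h : (f e).1 = (ends e).1 <;> simp_all
  simp only [indeg, hhead]
  calc #{e | (f e).1 = v} ≤ #(range (n v)) := by
        refine card_le_card_of_injOn (fun e => (f e).2) (fun e he => ?_) fun e he e' he' h => ?_
        · simp only [coe_filter, mem_univ, true_and, Set.mem_ofPred_eq] at he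
          simpa [he] using (mem_sigma.mp (hf_mem e)).2
        · simp only [coe_filter, mem_univ, true_and, Set.mem_ofPred_eq] at he he'
          exact hf_inj (Sigma.ext (he.trans he'.symm) (heq_of_eq h))
    _ = n v := card_range _

theorem exists_orientation_indeg_eq [Fintype V] (m : V → ℤ) (hm : ∑ v, m v = Fintype.card E)
    (hi : ∀ X : Finset V, (iG ends X : ℤ) ≤ ∑ v ∈ X, m v) :
    ∃ o : E → Bool, ∀ v, (indeg ends o v : ℤ) = m v := by
  have hm_nonneg : ∀ v, 0 ≤ m v := fun v => by simpa using (Int.natCast_nonneg _).trans (hi {v})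
  lift m to V → ℕ using hm_nonneg
  dsimp only at hm hi ⊢
  obtain ⟨o, ho⟩ := exists_orientation_indeg_le ends m fun X => by exact_mod_cast hi X
  have hsum : ∑ v, indeg ends o v = ∑ v, m v := by rw [sum_indeg_eq_card]; exact_mod_cast hm.symm
  exact ⟨o, fun v => by
    exact_mod_cast (sum_eq_sum_iff_of_le fun v _ => ho v).mp hsum v (mem_univ v)⟩

end Orientation

theorem kEdgeConnected_orientation_iff_general {V E : Type*} [Fintype V] [Fintype E] [DecidableEq V]
    (ends : E → V × V)
    (k : ℕ)
    (m : V → ℤ) (hm : ∑ v, m v = (Fintype.card E : ℤ)) :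
    (∃ o : E → Bool, (∀ v, (indeg ends o v : ℤ) = m v) ∧
        ∀ X : Finset V, X.Nonempty → X ≠ Finset.univ → k ≤ inCut ends o X) ↔
      ∀ X : Finset V, X.Nonempty → X ≠ Finset.univ →
        (iG ends X : ℤ) + (k : ℤ) ≤ ∑ v ∈ X, m v := by
  have hcut : ∀ o : E → Bool, (∀ v, (indeg ends o v : ℤ) = m v) → ∀ X : Finset V,
      ∑ v ∈ X, m v = inCut ends o X + iG ends X := fun o ho X => by
    simp_rw [← ho]
    exact_mod_cast sum_indeg_eq_inCut_add_iG ends o X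
  constructor
  · rintro ⟨o, ho, hconn⟩ X hne hne'
    have := hconn X hne hne'
    rw [hcut o ho X]
    omega
  · intro h
    obtain ⟨o, ho⟩ := exists_orientation_indeg_eq ends m hm fun X => by
      rcases X.eq_empty_or_nonempty with rfl | hne
      · simp [iG]
      by_cases huniv : X = univ
      · simp [huniv, hm, iG_univ]
      · linarith [h X hne huniv]
    refine ⟨o, ho, fun X hne hne' => ?_⟩
    have := h X hne hne'
    rw [hcut o ho X] at this
    omega

/-- An integral vector `m` with `m̃(V) = |E|` is the in-degree vector of
a `k`-edge-connected orientation of `G` iff `m̃(X) ≥ i_G(X) + k` for every `∅ ⊂ X ⊂ V`. -/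
theorem kEdgeConnected_orientation_iff {V E : Type*} [Fintype V] [Fintype E] [DecidableEq V]
    (ends : E → V × V) (hloop : ∀ e, (ends e).1 ≠ (ends e).2)
    (k : ℕ) (hk : 0 < k)
    (m : V → ℤ) (hm : ∑ v, m v = (Fintype.card E : ℤ)) :
    (∃ o : E → Bool, (∀ v, (indeg ends o v : ℤ) = m v) ∧
        ∀ X : Finset V, X.Nonempty → X ≠ Finset.univ → k ≤ inCut ends o X) ↔
      ∀ X : Finset V, X.Nonempty → X ≠ Finset.univ →
        (iG ends X : ℤ) + (k : ℤ) ≤ ∑ v ∈ X, m v :=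
  kEdgeConnected_orientation_iff_general ends k m hm
end
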